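/- Suppose G is bipartite and has the infinite collision property, and u, v are vertices whose graph distance is even. Then two independent simple random walks started at u and at v respectively collide at infinitely many times almost surely. -/

import Mathlib

/-!
Let the first walker bounce between `u` and the next vertex `w` of a geodesic from `u` to `v`,
while the second walks along the geodesic. After `d = dist u v` steps, `d` even, the pair has
moved from `(u, u)` to `(u, v)`, and this finite path has positive probability. By the Markov
property at time `d`, the shift-invariant event of finitely many collisions, which is null for
walks started at `(u, u)`, is then null for walks started at `(u, v)`.
-/

open MeasureTheory
open scoped ENNReal Classical

namespace CollisionsStmt

variable {V : Type*}

/-- One-step transition probabilities of the simple random walk on `G`: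
`p(u,v) = 1/deg u` if `v` is adjacent to `u`, and `0` otherwise. -/
noncomputable def step (G : SimpleGraph V) [G.LocallyFinite] (u v : V) : ℝ≥0∞ :=
  if G.Adj u v then ((G.degree u : ℝ≥0∞))⁻¹ else 0

/-- The `n`-step transition probabilities of the simple random walk on `G`. -/
noncomputable def pn (G : SimpleGraph V) [G.LocallyFinite] : ℕ → V → V → ℝ≥0∞
  | 0, u, v => if u = v then 1 else 0
  | n + 1, u, v => ∑' w, step G u w * pn G n w v

/-- `μ` is the law (on path space, via the Ionescu–Tulcea trajectory construction) of
two independent walks with one-step transition probabilities `p`, started at `a` and `b`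
respectively; equivalently, the Markov chain on `V × V` with kernel `p ⊗ p` started at `(a, b)`.
The law is characterized by being a probability measure with the prescribed
finite-dimensional (cylinder) distributions. -/
def IsPairWalkMeasure [MeasurableSpace V] (p : V → V → ℝ≥0∞) (a b : V)
    (μ : Measure (ℕ → V × V)) : Prop :=
  IsProbabilityMeasure μ ∧
    ∀ (n : ℕ) (x : ℕ → V × V),
      μ {ω | ∀ i ≤ n, ω i = x i} =
        (if x 0 = (a, b) then (1 : ℝ≥0∞) else 0) *
          ∏ i ∈ Finset.range n, (p (x i).1 (x (i + 1)).1 * p (x i).2 (x (i + 1)).2)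

/-- The event that the two walks do not collide at any time `n ≥ 1`. -/
def noCollision : Set (ℕ → V × V) := {ω | ∀ n ≥ 1, (ω n).1 ≠ (ω n).2}

/-- The event that the two walks have their last collision at the vertex `v`: for some
`n ≥ 0`, `X_n = Y_n = v` and `X_m ≠ Y_m` for all `m > n`. -/
def lastCollisionAt (v : V) : Set (ℕ → V × V) :=
  {ω | ∃ n : ℕ, ω n = (v, v) ∧ ∀ m > n, (ω m).1 ≠ (ω m).2}

/-- The event that the two walks collide at only finitely many times. -/
def finCollisions : Set (ℕ → V × V) := {ω | {n : ℕ | (ω n).1 = (ω n).2}.Finite}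

/-- The event that the two walks collide at infinitely many times. -/
def infCollisions : Set (ℕ → V × V) := {ω | {n : ℕ | (ω n).1 = (ω n).2}.Infinite}

/-- The event that the two walks never collide (including at time `0`). -/
def neverCollide : Set (ℕ → V × V) := {ω | ∀ n : ℕ, (ω n).1 ≠ (ω n).2}

open Filter Finset

def cylinder (n : ℕ) (x : ℕ → V × V) : Set (ℕ → V × V) := {ω | ∀ i ≤ n, ω i = x i}

def cylinders : Set (Set (ℕ → V × V)) := {s | ∃ n x, cylinder n x = s}

def shift (n : ℕ) (ω : ℕ → V × V) : ℕ → V × V := fun i => ω (n + i)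

def splice (n : ℕ) (x y : ℕ → V × V) : ℕ → V × V := fun i => if i ≤ n then x i else y (i - n)

noncomputable def pathWeight (p : V → V → ℝ≥0∞) (n : ℕ) (x : ℕ → V × V) : ℝ≥0∞ :=
  ∏ i ∈ range n, (p (x i).1 (x (i + 1)).1 * p (x i).2 (x (i + 1)).2)

lemma cylinder_eq_preimage_restrict (n : ℕ) (x : ℕ → V × V) :
    cylinder n x = (Iic n).restrict (π := fun _ => V × V) ⁻¹' {(Iic n).restrict x} := by
  ext ω
  simp [cylinder, funext_iff]

lemma cylinder_inter_cylinder_of_le {n m : ℕ} {x y : ℕ → V × V} (hnm : n ≤ m)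
    (hne : (cylinder n x ∩ cylinder m y).Nonempty) :
    cylinder n x ∩ cylinder m y = cylinder m y := by
  obtain ⟨ω, hωx, hωy⟩ := hne
  refine Set.inter_eq_self_of_subset_right fun ρ hρ i hi => ?_
  rw [hρ i (hi.trans hnm), ← hωy i (hi.trans hnm), hωx i hi]

lemma isPiSystem_cylinders : IsPiSystem (cylinders (V := V)) := by
  rintro _ ⟨n, x, rfl⟩ _ ⟨m, y, rfl⟩ hne
  rcases le_total n m with h | h
  · exact ⟨m, y, (cylinder_inter_cylinder_of_le h hne).symm⟩
  · rw [Set.inter_comm] at hne ⊢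
    exact ⟨n, x, (cylinder_inter_cylinder_of_le h hne).symm⟩

lemma splice_of_le {n i : ℕ} (x y : ℕ → V × V) (hi : i ≤ n) : splice n x y i = x i := if_pos hi

lemma splice_add {n : ℕ} {x y : ℕ → V × V} (h : y 0 = x n) (j : ℕ) :
    splice n x y (n + j) = y j := by
  rcases j.eq_zero_or_pos with rfl | hj
  · simp [splice, h]
  · simp [splice, hj.ne']

lemma cylinder_inter_shift_preimage_cylinder {n m : ℕ} {x y : ℕ → V × V} (h : y 0 = x n) :
    cylinder n x ∩ shift n ⁻¹' cylinder m y = cylinder (n + m) (splice n x y) := by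
  ext ω
  constructor
  · rintro ⟨hωx, hωy⟩ i hi
    rcases le_or_gt i n with hin | hin
    · rw [hωx i hin, splice_of_le x y hin]
    · obtain ⟨j, rfl⟩ := Nat.exists_eq_add_of_le hin.le
      rw [splice_add h]
      exact hωy j (by omega)
  · intro hω
    refine ⟨fun i hi => ?_, fun j hj => ?_⟩
    · rw [hω i (by omega), splice_of_le x y hi]
    · rw [← splice_add h]
      exact hω (n + j) (by omega)

lemma cylinder_inter_shift_preimage_cylinder_of_ne {n m : ℕ} {x y : ℕ → V × V}
    (h : y 0 ≠ x n) : cylinder n x ∩ shift n ⁻¹' cylinder m y = ∅ :=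
  Set.eq_empty_of_forall_notMem fun _ ⟨hωx, hωy⟩ =>
    h ((hωy 0 (Nat.zero_le m)).symm.trans (hωx n le_rfl))

lemma pathWeight_splice (p : V → V → ℝ≥0∞) {n m : ℕ} {x y : ℕ → V × V} (h : y 0 = x n) :
    pathWeight p (n + m) (splice n x y) = pathWeight p n x * pathWeight p m y := by
  unfold pathWeight
  rw [prod_range_add]
  congr 1
  · refine prod_congr rfl fun i hi => ?_
    have hi : i < n := mem_range.mp hi
    rw [splice_of_le x y hi.le, splice_of_le x y hi]
  · refine prod_congr rfl fun j _ => ?_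
    rw [add_assoc, splice_add h, splice_add h]

lemma pathWeight_ne_zero {p : V → V → ℝ≥0∞} {n : ℕ} {x : ℕ → V × V}
    (h : ∀ i < n, p (x i).1 (x (i + 1)).1 ≠ 0 ∧ p (x i).2 (x (i + 1)).2 ≠ 0) :
    pathWeight p n x ≠ 0 :=
  prod_ne_zero_iff.mpr fun i hi => mul_ne_zero_iff.mpr (h i (mem_range.mp hi))

section Measurability

variable [MeasurableSpace V]

lemma measurable_shift (n : ℕ) : Measurable (shift (V := V) n) :=
  measurable_pi_lambda _ fun i => measurable_pi_apply (n + i)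

variable [MeasurableSingletonClass V]

lemma measurableSet_cylinder (n : ℕ) (x : ℕ → V × V) : MeasurableSet (cylinder n x) := by
  rw [cylinder_eq_preimage_restrict]
  exact Finset.measurable_restrict _ (measurableSet_singleton _)

lemma generateFrom_cylinders [Countable V] :
    (inferInstance : MeasurableSpace (ℕ → V × V)) = MeasurableSpace.generateFrom cylinders := by
  -- Each coordinate `ω ↦ ω i` factors through the restriction to `Iic i`, a map into a
  -- countable space whose nonempty fibres are cylinders.
  refine le_antisymm (iSup_le fun i => ?_)
    (MeasurableSpace.generateFrom_le fun _ ⟨n, x, hs⟩ => hs ▸ measurableSet_cylinder n x)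
  have hrestrict : Measurable[MeasurableSpace.generateFrom cylinders]
      ((Iic i).restrict (π := fun _ => V × V)) := by
    refine @measurable_to_countable' _ _ _ _ (_) _ fun y => ?_
    rcases Set.eq_empty_or_nonempty ((Iic i).restrict (π := fun _ => V × V) ⁻¹' {y})
      with hy | ⟨ω, hω⟩
    · rw [hy]; exact @MeasurableSet.empty _ (_)
    · rw [Set.mem_preimage, Set.mem_singleton_iff] at hω
      rw [← hω, ← cylinder_eq_preimage_restrict]
      exact MeasurableSpace.measurableSet_generateFrom ⟨i, ω, rfl⟩
  exact ((measurable_pi_apply (⟨i, mem_Iic.mpr le_rfl⟩ : Iic i)).comp hrestrict).comap_le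

end Measurability

namespace IsPairWalkMeasure

variable [MeasurableSpace V] {p : V → V → ℝ≥0∞} {a b : V} {μ ν : Measure (ℕ → V × V)}

lemma measure_cylinder (hμ : IsPairWalkMeasure p a b μ) (n : ℕ) (x : ℕ → V × V) :
    μ (cylinder n x) = (if x 0 = (a, b) then 1 else 0) * pathWeight p n x :=
  hμ.2 n x

lemma measure_cylinder_ne_zero (hμ : IsPairWalkMeasure p a b μ) {n : ℕ} {x : ℕ → V × V}
    (h0 : x 0 = (a, b)) (h : ∀ i < n, p (x i).1 (x (i + 1)).1 ≠ 0 ∧ p (x i).2 (x (i + 1)).2 ≠ 0) :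
    μ (cylinder n x) ≠ 0 := by
  rw [hμ.measure_cylinder, if_pos h0, one_mul]
  exact pathWeight_ne_zero h

variable [Countable V] [MeasurableSingletonClass V]

theorem map_shift_restrict_cylinder {n : ℕ} {x : ℕ → V × V} (hμ : IsPairWalkMeasure p a b μ)
    (hν : IsPairWalkMeasure p (x n).1 (x n).2 ν) :
    (μ.restrict (cylinder n x)).map (shift n) = μ (cylinder n x) • ν := by
  have := hμ.1
  have := hν.1
  refine ext_of_generate_finite _ generateFrom_cylinders isPiSystem_cylinders ?_ ?_
  · rintro _ ⟨m, y, rfl⟩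
    rw [Measure.map_apply (measurable_shift n) (measurableSet_cylinder m y),
      Measure.restrict_apply (measurable_shift n (measurableSet_cylinder m y)), Set.inter_comm,
      Measure.smul_apply, smul_eq_mul]
    by_cases hy : y 0 = x n
    · rw [cylinder_inter_shift_preimage_cylinder hy, hμ.measure_cylinder, hμ.measure_cylinder,
        hν.measure_cylinder, splice_of_le x y (Nat.zero_le n), pathWeight_splice p hy, if_pos hy]
      ring
    · rw [cylinder_inter_shift_preimage_cylinder_of_ne hy, hν.measure_cylinder, if_neg hy]
      simp
  · rw [Measure.map_apply (measurable_shift n) MeasurableSet.univ, Set.preimage_univ,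
      Measure.restrict_apply_univ, Measure.smul_apply, measure_univ, smul_eq_mul, mul_one]

theorem measure_eq_one_of_shift_preimage_eq {n : ℕ} {x : ℕ → V × V}
    (hμ : IsPairWalkMeasure p a b μ) (hν : IsPairWalkMeasure p (x n).1 (x n).2 ν)
    (hx : μ (cylinder n x) ≠ 0) {E : Set (ℕ → V × V)} (hE : MeasurableSet E)
    (hshift : shift n ⁻¹' E = E) (hμE : μ E = 1) : ν E = 1 := by
  have := hμ.1
  have := hν.1
  have hμEc : μ Eᶜ = 0 := prob_compl_eq_zero_iff hE |>.mpr hμE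
  have hmarkov := congrArg (· Eᶜ) (map_shift_restrict_cylinder hμ hν)
  simp only [Measure.map_apply (measurable_shift n) hE.compl, Set.preimage_compl, hshift,
    Measure.restrict_apply hE.compl, Measure.smul_apply, smul_eq_mul] at hmarkov
  have hνEc : ν Eᶜ = 0 := by
    rw [measure_mono_null Set.inter_subset_left hμEc] at hmarkov
    exact (mul_eq_zero.mp hmarkov.symm).resolve_left hx
  exact prob_compl_eq_zero_iff hE |>.mp hνEc

end IsPairWalkMeasure

lemma infCollisions_eq_limsup :
    (infCollisions : Set (ℕ → V × V)) = limsup (fun n => {ω | (ω n).1 = (ω n).2}) atTop := by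
  ext ω
  simp [infCollisions, mem_limsup_iff_frequently_mem, Nat.frequently_atTop_iff_infinite]

lemma measurableSet_infCollisions [MeasurableSpace V] [MeasurableSingletonClass V] [Countable V] :
    MeasurableSet (infCollisions : Set (ℕ → V × V)) := by
  rw [infCollisions_eq_limsup]
  have hdiag : MeasurableSet {z : V × V | z.1 = z.2} := (Set.to_countable _).measurableSet
  exact .measurableSet_limsup fun n => (measurable_pi_apply (X := fun _ => V × V) n) hdiag

lemma shift_preimage_infCollisions (n : ℕ) :
    shift n ⁻¹' (infCollisions : Set (ℕ → V × V)) = infCollisions := by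
  ext ω
  change {m | (ω (n + m)).1 = (ω (n + m)).2}.Infinite ↔ {k | (ω k).1 = (ω k).2}.Infinite
  simp only [← Nat.frequently_atTop_iff_infinite]
  conv_rhs => rw [← map_add_atTop_eq_nat n, frequently_map]
  simp only [add_comm]

lemma step_ne_zero {G : SimpleGraph V} [G.LocallyFinite] {x y : V} (h : G.Adj x y) :
    step G x y ≠ 0 := by
  simp [step, h]

def bounce (u w : V) (i : ℕ) : V := if Even i then u else w

lemma adj_bounce_succ {G : SimpleGraph V} {u w : V} (h : G.Adj u w) (i : ℕ) :
    G.Adj (bounce u w i) (bounce u w (i + 1)) := by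
  rcases Nat.even_or_odd i with hi | hi
  · simpa [bounce, hi, Nat.even_add_one] using h
  · simpa [bounce, Nat.not_even_iff_odd.mpr hi, Nat.even_add_one] using h.symm

theorem bipartite_even_distance_collide_general
    [Countable V] [MeasurableSpace V] [DiscreteMeasurableSpace V]
    (G : SimpleGraph V) [G.LocallyFinite]
    (hconn : G.Connected)
    (μ : V → V → Measure (ℕ → V × V))
    (hμ : ∀ a b : V, IsPairWalkMeasure (step G) a b (μ a b))
    (hICP : ∀ w : V, μ w w infCollisions = 1)
    (u v : V) (heven : Even (G.dist u v)) :
    μ u v infCollisions = 1 := by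
  obtain ⟨q, hq⟩ := (hconn.preconnected u v).exists_walk_length_eq_dist
  let x : ℕ → V × V := fun i => (bounce u (q.getVert 1) i, q.getVert i)
  have hx0 : x 0 = (u, u) := by simp [x, bounce]
  have hxd : x (G.dist u v) = (u, v) := by
    simp only [x, bounce, if_pos heven]
    rw [← hq, q.getVert_length]
  have hstep (i : ℕ) (hi : i < G.dist u v) :
      step G (x i).1 (x (i + 1)).1 ≠ 0 ∧ step G (x i).2 (x (i + 1)).2 ≠ 0 := by
    have hu : G.Adj u (q.getVert 1) := by simpa using q.adj_getVert_succ (i := 0) (by omega)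
    exact ⟨step_ne_zero (adj_bounce_succ hu i), step_ne_zero (q.adj_getVert_succ (by omega))⟩
  have hν : IsPairWalkMeasure (step G) (x (G.dist u v)).1 (x (G.dist u v)).2 (μ u v) := by
    rw [hxd]; exact hμ u v
  exact (hμ u u).measure_eq_one_of_shift_preimage_eq hν
    ((hμ u u).measure_cylinder_ne_zero hx0 hstep) measurableSet_infCollisions
    (shift_preimage_infCollisions _) (hICP u)

/-- on a bipartite graph with the infinite collision property, two
independent walks started at even distance collide infinitely often a.s. -/
theorem bipartite_even_distance_collide
    [Countable V] [MeasurableSpace V] [DiscreteMeasurableSpace V]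
    (G : SimpleGraph V) [G.LocallyFinite]
    (hconn : G.Connected) (hdeg : ∀ v : V, 0 < G.degree v)
    (hbip : ∃ A : Set V, ∀ u v : V, G.Adj u v → (u ∈ A ↔ v ∉ A))
    (μ : V → V → Measure (ℕ → V × V))
    (hμ : ∀ a b : V, IsPairWalkMeasure (step G) a b (μ a b))
    (hICP : ∀ w : V, μ w w infCollisions = 1)
    (u v : V) (heven : Even (G.dist u v)) :
    μ u v infCollisions = 1 :=
  bipartite_even_distance_collide_general G hconn μ hμ hICP u v heven
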